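/- arXiv:2308.00793 — 6 statements merged into one kernel-verified Lean document; each statement's English description precedes it below -/
import Mathlib

section
/- For every real ε with 0 < ε < 1 and every real y with y ≥ 200/ε², it holds that 5·log_{1+ε} y ≤ √(ε/5)·y. -/
set_option maxHeartbeats 1000000 in
theorem five_log_le_sqrt_mul (ε y : ℝ) (hε0 : 0 < ε) (hε1 : ε < 1)
    (hy : y ≥ 200 / ε ^ 2) :
    5 * (Real.log y / Real.log (1 + ε)) ≤ Real.sqrt (ε / 5) * y := by
  have hε2 : (0:ℝ) < ε ^ 2 := by positivity
  have hy200 : (200:ℝ) ≤ y := by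
    have h : (200:ℝ) ≤ 200 / ε ^ 2 := by
      rw [le_div_iff₀ hε2]; nlinarith
    linarith
  have hy0 : (0:ℝ) < y := by linarith
  have h1ε : (0:ℝ) < 1 + ε := by linarith
  -- log(1+ε) ≥ ε/2
  have hLlow : ε / 2 ≤ Real.log (1 + ε) := by
    have h := Real.log_le_sub_one_of_pos (show (0:ℝ) < (1+ε)⁻¹ by positivity)
    rw [Real.log_inv] at h
    have h2 : (1+ε)⁻¹ - 1 = -(ε/(1+ε)) := by field_simp; ring
    rw [h2] at h
    have h3 : ε/2 ≤ ε/(1+ε) := by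
      rw [div_le_div_iff₀ (by norm_num) h1ε]; nlinarith
    linarith
  have hL0 : 0 < Real.log (1 + ε) := lt_of_lt_of_le (by linarith) hLlow
  obtain ⟨s, hs⟩ : ∃ s : ℝ, s = Real.sqrt (Real.sqrt y) := ⟨_, rfl⟩
  have hsy : Real.sqrt y = s ^ 2 := by
    rw [hs]; exact (Real.sq_sqrt (Real.sqrt_nonneg y)).symm
  have hys : y = s ^ 4 := by
    have h := Real.sq_sqrt hy0.le
    rw [hsy] at h
    rw [← h]; ring
  have hs0 : 0 < s := by
    rw [hs]
    exact Real.sqrt_pos.2 (Real.sqrt_pos.2 hy0)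
  have he : (2.7182818283 : ℝ) < Real.exp 1 := Real.exp_one_gt_d9
  have he0 : (0:ℝ) < Real.exp 1 := Real.exp_pos 1
  have hlogs : Real.log s ≤ s / Real.exp 1 := by
    have h := Real.log_le_sub_one_of_pos (show (0:ℝ) < s / Real.exp 1 by positivity)
    rw [Real.log_div hs0.ne' (Real.exp_ne_zero 1), Real.log_exp] at h
    linarith
  have hlogs' : Real.exp 1 * Real.log s ≤ s := (le_div_iff₀' he0).mp hlogs
  have hlogy : Real.log y = 4 * Real.log s := by
    rw [hys, Real.log_pow]; push_cast; ring
  have hlogy0 : 0 ≤ Real.log y := Real.log_nonneg (by linarith)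
  -- key: v := ε * s^2 ≥ 14
  have hv2 : 200 ≤ (ε * s ^ 2) ^ 2 := by
    have h : 200 ≤ ε ^ 2 * y := by
      rw [ge_iff_le, div_le_iff₀ hε2] at hy
      nlinarith
    nlinarith [hys]
  have hv0 : 0 ≤ ε * s ^ 2 := by positivity
  have hv : 14 ≤ ε * s ^ 2 := by nlinarith
  -- final constant inequality: 40 * s ≤ √(ε/5) * s^4 * (ε * e)
  have hA : Real.sqrt (ε/5) ^ 2 = ε/5 := Real.sq_sqrt (by positivity)
  have hA0 : 0 ≤ Real.sqrt (ε/5) := Real.sqrt_nonneg _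
  have hkey : 40 * s ≤ Real.sqrt (ε/5) * s ^ 4 * (ε * Real.exp 1) := by
    have hR0 : 0 ≤ Real.sqrt (ε/5) * s ^ 4 * (ε * Real.exp 1) := by positivity
    have hsq : (40 * s) ^ 2 ≤ (Real.sqrt (ε/5) * s ^ 4 * (ε * Real.exp 1)) ^ 2 := by
      have expand : (Real.sqrt (ε/5) * s ^ 4 * (ε * Real.exp 1)) ^ 2
          = (1/5) * s ^ 2 * ((ε * s ^ 2) ^ 3) * (Real.exp 1) ^ 2 := by
        rw [mul_pow, mul_pow, mul_pow, hA]; ring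
      rw [expand]
      have h14 : (14:ℝ) ^ 3 ≤ (ε * s ^ 2) ^ 3 := by
        apply pow_le_pow_left₀ (by norm_num) hv
      have he2 : (7:ℝ) ≤ (Real.exp 1) ^ 2 := by nlinarith
      have hprod : (14:ℝ)^3 * 7 ≤ (ε * s ^ 2) ^ 3 * (Real.exp 1) ^ 2 :=
        mul_le_mul h14 he2 (by norm_num) (by positivity)
      nlinarith [mul_le_mul_of_nonneg_left hprod (sq_nonneg s)]
    exact le_of_pow_le_pow_left₀ two_ne_zero hR0 hsq
  -- chain
  have hchain : 5 * (Real.log y / Real.log (1 + ε)) ≤ 40 * s / (ε * Real.exp 1) := by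
    rw [show 5 * (Real.log y / Real.log (1 + ε)) = 5 * Real.log y / Real.log (1 + ε) by ring,
      div_le_div_iff₀ hL0 (by positivity)]
    -- goal: 5 * log y * (ε * e) ≤ 40 * s * log(1+ε)
    rw [hlogy]
    have h1 : 20 * (ε * (Real.exp 1 * Real.log s)) ≤ 20 * (ε * s) := by
      have := mul_le_mul_of_nonneg_left hlogs' (le_of_lt hε0)
      linarith
    have h2 : 40 * (s * (ε/2)) ≤ 40 * (s * Real.log (1 + ε)) := by
      have := mul_le_mul_of_nonneg_left hLlow hs0.le
      linarith
    linarith [h1, h2]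
  have hfin : 40 * s / (ε * Real.exp 1) ≤ Real.sqrt (ε/5) * y := by
    rw [div_le_iff₀ (by positivity), hys]
    exact hkey
  linarith
end

section
/- For every real ε with 0 < ε < 1 and every real y, there exists a natural number η such that the η-fold iterate g_ε^[η](y) satisfies g_ε^[η](y) ≤ 200/ε². -/
lemma five_log_decrease (ε : ℝ) (hε0 : 0 < ε) (hε1 : ε < 1) (t : ℝ)
    (ht : 200 / ε ^ 2 < t) :
    5 * (Real.log t / Real.log (1 + ε)) ≤ t - 1 := by
  have hε2 : (0:ℝ) < ε ^ 2 := by positivity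
  have ht200 : (200:ℝ) ≤ t := by
    have : (200:ℝ) ≤ 200 / ε ^ 2 := by
      rw [le_div_iff₀ hε2]; nlinarith
    linarith
  have ht0 : (0:ℝ) < t := by linarith
  have ht1 : (1:ℝ) < t := by linarith
  have hlogt0 : 0 ≤ Real.log t := Real.log_nonneg (by linarith)
  -- lower bound on log (1 + ε)
  have hL : ε / 2 ≤ Real.log (1 + ε) := by
    have hpos : (0:ℝ) < 1 + ε := by linarith
    have h := Real.log_le_sub_one_of_pos (show (0:ℝ) < (1 + ε)⁻¹ by positivity)
    rw [Real.log_inv] at h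
    have h3 : (1 + ε)⁻¹ ≤ 1 - ε / 2 := by
      rw [inv_le_iff_one_le_mul₀ hpos]
      nlinarith
    linarith
  have hL0 : 0 < Real.log (1 + ε) := by linarith
  -- cube root
  set u : ℝ := t ^ ((1:ℝ)/3) with hu_def
  have hu0 : 0 < u := Real.rpow_pos_of_pos ht0 _
  have hu3 : u ^ 3 = t := by
    rw [hu_def, ← Real.rpow_natCast (t ^ ((1:ℝ)/3)) 3, ← Real.rpow_mul ht0.le]
    norm_num
  have hlogu : Real.log t = 3 * Real.log u := by
    rw [hu_def, Real.log_rpow ht0]; ring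
  have hlog_le : Real.log t ≤ 3 * (u - 1) := by
    have := Real.log_le_sub_one_of_pos hu0
    rw [hlogu]; linarith
  -- u ≥ 5
  have hu5 : (5:ℝ) ≤ u := by
    nlinarith [hu3, ht200, hu0, mul_nonneg hu0.le hu0.le, sq_nonneg (u - 5), sq_nonneg (u + 5)]
  -- ε * u ^ 2 ≥ 30
  have hcube : 200 ≤ ε ^ 2 * u ^ 3 := by
    rw [hu3]
    rw [div_lt_iff₀ hε2] at ht
    nlinarith
  have h1000 : 1000 ≤ ε ^ 2 * u ^ 4 := by
    nlinarith [hcube, hu5, hε0, mul_nonneg (mul_nonneg hε0.le hε0.le) (pow_pos hu0 3).le]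
  have heu2 : 30 ≤ ε * u ^ 2 := by
    nlinarith [h1000, mul_pos hε0 (pow_pos hu0 2), sq_nonneg (ε * u ^ 2 - 30), sq_nonneg (ε * u ^ 2)]
  -- main chain
  have hmain : 30 * (u - 1) ≤ ε * (u ^ 3 - 1) := by
    nlinarith [heu2, hu5, hε0, hε1]
  have step1 : 5 * (Real.log t / Real.log (1 + ε)) ≤ 5 * (Real.log t / (ε / 2)) := by
    have := div_le_div_of_nonneg_left hlogt0 (by positivity : (0:ℝ) < ε / 2) hL
    linarith
  have step2 : 5 * (Real.log t / (ε / 2)) = 10 * Real.log t / ε := by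
    field_simp; ring
  have step3 : 10 * Real.log t / ε ≤ t - 1 := by
    rw [div_le_iff₀ hε0]
    have h1 : 10 * Real.log t ≤ 30 * (u - 1) := by linarith
    have h2 : ε * (u ^ 3 - 1) = (t - 1) * ε := by rw [hu3]; ring
    linarith
  linarith [step1, step2 ▸ step1, step3]

theorem iterated_five_log_eventually_small (ε y : ℝ) (hε0 : 0 < ε) (hε1 : ε < 1) :
    ∃ η : ℕ, (fun t : ℝ => 5 * (Real.log t / Real.log (1 + ε)))^[η] y ≤ 200 / ε ^ 2 := by
  set g : ℝ → ℝ := fun t : ℝ => 5 * (Real.log t / Real.log (1 + ε)) with hg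
  set B : ℝ := 200 / ε ^ 2 with hB
  have main : ∀ n : ℕ, ∀ t : ℝ, t ≤ B + n → ∃ η : ℕ, g^[η] t ≤ B := by
    intro n
    induction n with
    | zero =>
      intro t ht
      exact ⟨0, by simpa using ht⟩
    | succ n ih =>
      intro t ht
      by_cases h : t ≤ B
      · exact ⟨0, by simpa using h⟩
      · push_neg at h
        have hdec : g t ≤ t - 1 := five_log_decrease ε hε0 hε1 t h
        obtain ⟨η, hη⟩ := ih (g t) (by push_cast at ht ⊢; linarith)
        exact ⟨η + 1, by rwa [Function.iterate_succ_apply]⟩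
  obtain ⟨η, hη⟩ := main ⌈y - B⌉₊ y (by linarith [Nat.le_ceil (y - B)])
  exact ⟨η, hη⟩
end

section
/- For every real ε with 0 < ε < 1 and every real y ≥ 1: if g_ε(y) ≥ 200/ε² and g_ε(g_ε(y)) ≥ 200/ε², then g_ε(g_ε(g_ε(y))) ≤ 2·ln y. -/
set_option maxHeartbeats 1000000

theorem three_iterates_le_two_log (ε y : ℝ) (hε0 : 0 < ε) (hε1 : ε < 1) (hy : y ≥ 1)
    (h1 : 5 * (Real.log y / Real.log (1 + ε)) ≥ 200 / ε ^ 2)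
    (h2 : 5 * (Real.log (5 * (Real.log y / Real.log (1 + ε))) / Real.log (1 + ε))
            ≥ 200 / ε ^ 2) :
    5 * (Real.log (5 * (Real.log (5 * (Real.log y / Real.log (1 + ε))) / Real.log (1 + ε)))
          / Real.log (1 + ε)) ≤ 2 * Real.log y := by
  set L := Real.log (1 + ε) with hLdef
  have hL : 0 < L := Real.log_pos (by linarith)
  have hLε : L ≤ ε := by
    have := Real.log_le_sub_one_of_pos (show (0:ℝ) < 1 + ε by linarith)
    linarith
  have hLge : ε / 2 ≤ L := by
    have h := Real.log_le_sub_one_of_pos (show (0:ℝ) < (1 + ε)⁻¹ by positivity)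
    rw [Real.log_inv] at h
    have h2' : 1 - (1 + ε)⁻¹ ≤ L := by linarith
    have h3 : ε / 2 ≤ 1 - (1 + ε)⁻¹ := by
      have hp : (0:ℝ) < 1 + ε := by linarith
      have hq : (1 + ε)⁻¹ * (1 + ε) = 1 := inv_mul_cancel₀ (ne_of_gt hp)
      nlinarith [inv_pos.mpr hp]
    linarith
  set a := 5 * (Real.log y / L) with hadef
  set b := 5 * (Real.log a / L) with hbdef
  clear_value L a b
  -- basic positivity
  have hε2 : (0:ℝ) < ε ^ 2 := by positivity
  have h200 : (200:ℝ) ≤ 200 / ε ^ 2 := by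
    rw [le_div_iff₀ hε2]; nlinarith
  have ha200 : (200:ℝ) ≤ a := le_trans h200 h1
  have ha0 : (0:ℝ) < a := by linarith
  have hb200 : (200:ℝ) ≤ b := le_trans h200 h2
  have hb0 : (0:ℝ) < b := by linarith
  -- log a ≥ 20/ε
  have hbL : b * L = 5 * Real.log a := by
    rw [hbdef]; field_simp
  have hla : 20 / ε ≤ Real.log a := by
    rw [div_le_iff₀ hε0]
    have h2'' : 200 / ε ^ 2 * L ≤ b * L := by
      exact mul_le_mul_of_nonneg_right h2 hL.le
    rw [hbL] at h2''
    have hu : 200 / ε ^ 2 * ε ^ 2 = 200 := by field_simp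
    nlinarith [mul_le_mul_of_nonneg_right hLge (le_of_lt hε2),
      mul_le_mul_of_nonneg_right h2'' hε0.le,
      mul_pos hε0 hε0]
  -- eighth root
  set r := Real.sqrt (Real.sqrt (Real.sqrt a)) with hrdef
  clear_value r
  have hr0 : 0 < r := hrdef ▸ Real.sqrt_pos.mpr (Real.sqrt_pos.mpr (Real.sqrt_pos.mpr ha0))
  have hr8 : r ^ 8 = a := by
    have e1 : r ^ 2 = Real.sqrt (Real.sqrt a) := hrdef ▸ Real.sq_sqrt (Real.sqrt_nonneg _)
    have e2 : Real.sqrt (Real.sqrt a) ^ 2 = Real.sqrt a := Real.sq_sqrt (Real.sqrt_nonneg _)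
    have e3 : Real.sqrt a ^ 2 = a := Real.sq_sqrt ha0.le
    calc r ^ 8 = ((r ^ 2) ^ 2) ^ 2 := by ring
    _ = a := by rw [e1, e2, e3]
  have hlogr : Real.log a = 8 * Real.log r := by
    rw [hrdef, Real.log_sqrt (Real.sqrt_nonneg _), Real.log_sqrt (Real.sqrt_nonneg _),
      Real.log_sqrt ha0.le]
    ring
  have hla8r : Real.log a ≤ 8 * r := by
    have := Real.log_le_sub_one_of_pos hr0
    rw [hlogr]; linarith
  have hrε : 2.5 ≤ r * ε := by
    have : 20 / ε ≤ 8 * r := le_trans hla hla8r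
    rw [div_le_iff₀ hε0] at this
    linarith
  have hr25 : 2.5 ≤ r := by
    have h := mul_le_mul_of_nonneg_left hε1.le hr0.le
    linarith [h, hrε]
  -- b ≤ 10 a / ε
  have hlaa : Real.log a ≤ a := by
    have := Real.log_le_sub_one_of_pos ha0
    linarith
  have hbbound : b ≤ 10 * a / ε := by
    rw [le_div_iff₀ hε0]
    have key : b * ε * L ≤ 10 * a * L := by
      have hx : b * L * ε ≤ 5 * a * ε := by
        rw [hbL]
        have := mul_le_mul_of_nonneg_right hlaa hε0.le
        linarith
      have hy' := mul_le_mul_of_nonneg_left hLge (by positivity : (0:ℝ) ≤ 10 * a)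
      linarith [hx, hy']
    exact le_of_mul_le_mul_right (by linarith [key]) hL
  -- log b bound
  have hlb : Real.log b ≤ Real.log 10 + Real.log a - Real.log ε := by
    have h1' : Real.log b ≤ Real.log (10 * a / ε) := by
      apply Real.log_le_log hb0 hbbound
    rwa [Real.log_div (by positivity) (ne_of_gt hε0), Real.log_mul (by norm_num) (ne_of_gt ha0)]
      at h1'
  have hl10 : Real.log 10 ≤ 9 := by
    have := Real.log_le_sub_one_of_pos (show (0:ℝ) < 10 by norm_num)
    linarith
  have hlε : -Real.log ε ≤ 1 / ε := by
    have := Real.log_le_sub_one_of_pos (show (0:ℝ) < ε⁻¹ by positivity)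
    rw [Real.log_inv] at this
    rw [one_div]; linarith
  have h50ε : 50 / ε ≤ 20 * r := by
    rw [div_le_iff₀ hε0]; linarith
  -- final numeric inequality
  have hnum : 450 + 420 * r ≤ r ^ 8 * ε ^ 2 := by
    have h1' : 6.25 * r ^ 6 ≤ r ^ 8 * ε ^ 2 := by
      have hsq : 6.25 ≤ (r * ε) ^ 2 := by
        have := mul_le_mul hrε hrε (by norm_num) (mul_pos hr0 hε0).le
        linarith [this]
      have h2' := mul_le_mul_of_nonneg_left hsq (pow_nonneg hr0.le 6)
      linarith [h2']
    have hr2 : 6.25 ≤ r ^ 2 := by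
      have := mul_le_mul hr25 hr25 (by norm_num) hr0.le
      linarith [this]
    have hr4 : 39 ≤ r ^ 4 := by
      have := mul_le_mul hr2 hr2 (by norm_num) (pow_nonneg hr0.le 2)
      linarith [this]
    have hr5 : 97 ≤ r ^ 5 := by
      have := mul_le_mul hr4 hr25 (by norm_num) (pow_nonneg hr0.le 4)
      linarith [this]
    have hr6 : 97 * r ≤ r ^ 6 := by
      have := mul_le_mul_of_nonneg_right hr5 hr0.le
      linarith [this]
    have h6 := mul_le_mul_of_nonneg_left hr6 (by norm_num : (0:ℝ) ≤ 6.25)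
    linarith [h6, hr25]
  -- 50 log b ≤ a ε²
  have hmain : 50 * Real.log b ≤ a * ε ^ 2 := by
    have : 50 * Real.log b ≤ 450 + 50 * Real.log a + 50 / ε := by
      have h1' : 50 * Real.log b ≤ 50 * Real.log 10 + 50 * Real.log a - 50 * Real.log ε := by linarith
      have h2' : -(50 * Real.log ε) ≤ 50 * (1 / ε) := by linarith
      have h3' : 50 * (1 / ε) = 50 / ε := by ring
      linarith
    have h8r : 50 * Real.log a ≤ 400 * r := by linarith
    rw [← hr8]; linarith [this, h8r, h50ε, hnum]
  -- conclude
  have hyL : Real.log y = a * L / 5 := by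
    rw [hadef]; field_simp
  have hkey : Real.log b ≤ 2 * a * L ^ 2 / 25 := by
    have hL2 : ε ^ 2 / 4 ≤ L ^ 2 := by nlinarith
    have hz := mul_le_mul_of_nonneg_left hL2 ha0.le
    linarith [hz, hmain]
  rw [hyL]
  have heq : 5 * (Real.log b / L) = 5 * Real.log b / L := by ring
  rw [heq, div_le_iff₀ hL]
  have := mul_le_mul_of_nonneg_right hkey (by norm_num : (0:ℝ) ≤ 25)
  linarith [this]
end

section
/- Let U be a finite set and 𝒮 a finite family of subsets of U such that every element of U belongs to at most f sets of 𝒮, where f is a natural number. Let ε be a real with 0 < ε ≤ 1/10, let c : 𝒮 → ℝ with c_s > 0 for all s, ω : U → ℝ with ω(e) ≥ 0 for all e, and φ : 𝒮 → ℝ with φ(s) ≥ 0 for all s. Let T = { s ∈ 𝒮 : ω(s) + φ(s) ≥ c_s/(1+ε) } be the family of tight sets. Assume: (i) ω(s) ≤ (1+ε)·c_s for every s ∈ 𝒮; (ii) Σ_{s∈𝒮} φ(s) ≤ ε·(Σ_{s∈T} c_s + f·Σ_{e∈U} ω(e)); (iii) every element of U belongs to some set in T; and (iv) 𝒮* ⊆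 𝒮 is a set cover of U. Then Σ_{s∈T} c_s ≤ (1+5ε)·f·Σ_{s∈𝒮*} c_s. -/
lemma sum_sum_eq_card_mul {α : Type*} [DecidableEq α] (U : Finset α) (ω : α → ℝ)
    (F : Finset (Finset α)) (hF : ∀ s ∈ F, s ⊆ U) :
    ∑ s ∈ F, ∑ e ∈ s, ω e = ∑ e ∈ U, ((F.filter (fun s => e ∈ s)).card : ℝ) * ω e := by
  have h1 : ∀ s ∈ F, ∑ e ∈ s, ω e = ∑ e ∈ U, if e ∈ s then ω e else 0 := by
    intro s hs
    rw [Finset.sum_ite_mem]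
    congr 1
    exact (Finset.inter_eq_right.mpr (hF s hs)).symm
  rw [Finset.sum_congr rfl h1, Finset.sum_comm]
  refine Finset.sum_congr rfl fun e he => ?_
  rw [← Finset.sum_filter, Finset.sum_const, nsmul_eq_mul]

theorem tight_sets_approximation {α : Type*} [DecidableEq α]
    (U : Finset α) (𝒮 : Finset (Finset α)) (f : ℕ) (ε : ℝ)
    (c : Finset α → ℝ) (ω : α → ℝ) (φ : Finset α → ℝ)
    (hε0 : 0 < ε) (hε1 : ε ≤ 1 / 10)
    (hsub : ∀ s ∈ 𝒮, s ⊆ U)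
    (hfreq : ∀ e ∈ U, (𝒮.filter (fun s => e ∈ s)).card ≤ f)
    (hc : ∀ s ∈ 𝒮, 0 < c s)
    (hω : ∀ e ∈ U, 0 ≤ ω e)
    (hφ : ∀ s ∈ 𝒮, 0 ≤ φ s)
    (hwt : ∀ s ∈ 𝒮, ∑ e ∈ s, ω e ≤ (1 + ε) * c s)
    (hdead : ∑ s ∈ 𝒮, φ s ≤
      ε * ((∑ s ∈ 𝒮.filter (fun s => (∑ e ∈ s, ω e) + φ s ≥ c s / (1 + ε)), c s)
            + f * ∑ e ∈ U, ω e))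
    (hcoverT : ∀ e ∈ U, ∃ s ∈ 𝒮.filter (fun s => (∑ e ∈ s, ω e) + φ s ≥ c s / (1 + ε)), e ∈ s)
    (𝒮star : Finset (Finset α)) (hstar : 𝒮star ⊆ 𝒮)
    (hcover : ∀ e ∈ U, ∃ s ∈ 𝒮star, e ∈ s) :
    (∑ s ∈ 𝒮.filter (fun s => (∑ e ∈ s, ω e) + φ s ≥ c s / (1 + ε)), c s)
      ≤ (1 + 5 * ε) * f * ∑ s ∈ 𝒮star, c s := by
  set T := 𝒮.filter (fun s => (∑ e ∈ s, ω e) + φ s ≥ c s / (1 + ε)) with hT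
  have hε1' : (0:ℝ) < 1 + ε := by linarith
  have hTsub : T ⊆ 𝒮 := Finset.filter_subset _ _
  set A := ∑ s ∈ T, c s with hA
  set W := ∑ e ∈ U, ω e with hW
  set C := ∑ s ∈ 𝒮star, c s with hC
  -- A ≤ (1+ε)(Σ_T ω(s) + Σ_T φ(s))
  have h1 : A ≤ (1 + ε) * ((∑ s ∈ T, ∑ e ∈ s, ω e) + ∑ s ∈ T, φ s) := by
    rw [← Finset.sum_add_distrib, Finset.mul_sum]
    refine Finset.sum_le_sum fun s hs => ?_
    have := (Finset.mem_filter.mp hs).2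
    rw [ge_iff_le, div_le_iff₀ hε1'] at this
    linarith [this]
  -- Σ_T ω(s) ≤ f * W
  have h2 : ∑ s ∈ T, ∑ e ∈ s, ω e ≤ (f : ℝ) * W := by
    rw [sum_sum_eq_card_mul U ω T (fun s hs => hsub s (hTsub hs)), hW, Finset.mul_sum]
    refine Finset.sum_le_sum fun e he => ?_
    refine mul_le_mul_of_nonneg_right ?_ (hω e he)
    exact_mod_cast le_trans (Nat.cast_le.mpr (Finset.card_le_card
      (Finset.filter_subset_filter _ hTsub))) (Nat.cast_le.mpr (hfreq e he))
  -- Σ_T φ ≤ Σ_𝒮 φ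
  have h3 : ∑ s ∈ T, φ s ≤ ∑ s ∈ 𝒮, φ s :=
    Finset.sum_le_sum_of_subset_of_nonneg hTsub (fun s hs _ => hφ s hs)
  -- W ≤ (1+ε) C
  have h4 : W ≤ (1 + ε) * C := by
    have hW1 : W ≤ ∑ s ∈ 𝒮star, ∑ e ∈ s, ω e := by
      rw [sum_sum_eq_card_mul U ω 𝒮star (fun s hs => hsub s (hstar hs)), hW]
      refine Finset.sum_le_sum fun e he => ?_
      have hcard : 1 ≤ (𝒮star.filter (fun s => e ∈ s)).card := by
        obtain ⟨s, hs, hes⟩ := hcover e he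
        exact Finset.card_pos.mpr ⟨s, Finset.mem_filter.mpr ⟨hs, hes⟩⟩
      nlinarith [hω e he, (Nat.one_le_cast (α := ℝ)).mpr hcard]
    refine hW1.trans ?_
    rw [hC, Finset.mul_sum]
    exact Finset.sum_le_sum fun s hs => hwt s (hstar hs)
  have hWnn : 0 ≤ W := Finset.sum_nonneg fun e he => hω e he
  have hCnn : 0 ≤ C := Finset.sum_nonneg fun s hs => (hc s (hstar hs)).le
  have hfnn : (0:ℝ) ≤ f := Nat.cast_nonneg f
  have key : A ≤ (1 + ε) * ((f : ℝ) * W + ε * (A + f * W)) := by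
    calc A ≤ (1 + ε) * ((∑ s ∈ T, ∑ e ∈ s, ω e) + ∑ s ∈ T, φ s) := h1
    _ ≤ (1 + ε) * ((f : ℝ) * W + ε * (A + f * W)) := by
        refine mul_le_mul_of_nonneg_left ?_ hε1'.le
        have := h3.trans hdead
        linarith
  have hfW : (f:ℝ) * W ≤ (1 + ε) * ((f:ℝ) * C) := by nlinarith
  have k1 : A * (1 - ε - ε^2) ≤ (1+ε)^2 * ((f:ℝ)*W) := by nlinarith [key]
  have k2 : (1+ε)^2 * ((f:ℝ)*W) ≤ (1+ε)^3 * ((f:ℝ)*C) := by nlinarith [hfW, sq_nonneg (1+ε)]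
  have hQ : 0 ≤ 1 - 9*ε - 6*ε^2 := by nlinarith
  have k3 : (1+ε)^3 * ((f:ℝ)*C) ≤ (1+5*ε)*(1-ε-ε^2) * ((f:ℝ)*C) := by
    nlinarith [mul_nonneg (mul_nonneg hε0.le hQ) (mul_nonneg hfnn hCnn)]
  have hpos : (0:ℝ) < 1 - ε - ε^2 := by nlinarith
  have hk := (k1.trans k2).trans k3
  exact le_of_mul_le_mul_right (by nlinarith [hk]) hpos
end

section
/- For every real ε with 0 < ε < 1, all natural numbers i and b, and every real c with c ≥ (1+ε)^{−(b+1)}, it holds that (2/ε)·(1+ε)^{i+1}·c ≥ 2·max(i − b + 1, 0). -/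
/-! By Bernoulli's inequality, `(1 + ε) ^ n ≥ 1 + ε n ≥ ε (n + 1)` when `ε ≤ 1`. Since
`c ≥ (1 + ε) ^ (-(b + 1))`, the left-hand side is at least `(2 / ε) (1 + ε) ^ (i - b)`, and the
bound applied with `n = i - b` (trivial when `b > i`) gives the claim. -/

theorem mul_add_one_le_one_add_pow {ε : ℝ} (hε0 : 0 ≤ ε) (hε1 : ε ≤ 1) (n : ℕ) :
    ε * (n + 1) ≤ (1 + ε) ^ n := by
  have bernoulli := one_add_mul_le_pow (a := ε) (by linarith) n
  nlinarith

theorem mul_max_add_one_le_one_add_zpow {ε : ℝ} (hε0 : 0 < ε) (hε1 : ε ≤ 1) (k : ℤ) :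
    ε * ((max (k + 1) 0 : ℤ) : ℝ) ≤ (1 + ε) ^ k := by
  rcases le_or_gt 0 k with hk | hk
  · lift k to ℕ using hk
    rw [max_eq_left (by omega)]
    push_cast
    exact mul_add_one_le_one_add_pow hε0.le hε1 k
  · rw [max_eq_right (by omega), Int.cast_zero, mul_zero]
    positivity

theorem pow_succ_mul_zpow_neg_succ {a : ℝ} (ha : a ≠ 0) (i b : ℕ) :
    a ^ (i + 1) * a ^ (-((b : ℤ) + 1)) = a ^ ((i : ℤ) - b) := by
  rw [← zpow_natCast, ← zpow_add₀ ha]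
  congr 1
  push_cast
  ring

theorem per_set_estimate (ε : ℝ) (i b : ℕ) (c : ℝ)
    (hε0 : 0 < ε) (hε1 : ε < 1)
    (hc : c ≥ (1 + ε) ^ (-((b : ℤ) + 1))) :
    (2 / ε) * (1 + ε) ^ (i + 1) * c ≥ 2 * ((max ((i : ℤ) - b + 1) 0 : ℤ) : ℝ) := by
  have hbase : (0 : ℝ) < 1 + ε := by linarith
  calc (2 / ε) * (1 + ε) ^ (i + 1) * c
      ≥ (2 / ε) * ((1 + ε) ^ (i + 1) * (1 + ε) ^ (-((b : ℤ) + 1))) := by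
        rw [← mul_assoc]
        gcongr
    _ = (2 / ε) * (1 + ε) ^ ((i : ℤ) - b) := by
        rw [pow_succ_mul_zpow_neg_succ hbase.ne']
    _ ≥ (2 / ε) * (ε * ((max ((i : ℤ) - b + 1) 0 : ℤ) : ℝ)) := by
        gcongr
        exact mul_max_add_one_le_one_add_zpow hε0 hε1.le _
    _ = 2 * ((max ((i : ℤ) - b + 1) 0 : ℤ) : ℝ) := by
        field_simp
end

section
/- Let ε be a real with 0 < ε < 1, f and k natural numbers, and define β_i = (2/ε²)·(1+ε)^{i+1}. Suppose that for each i ∈ {0,…,k} we are given: a finite set T_i with functions assigning to each s ∈ T_i a real cost c_s and a natural number b_s such that c_s ≥ (1+ε)^{−(b_s+1)}; a real φ_i ≥ 0; a natural number a_i; and a real w_i with w_i ≥ a_i·(1+ε)^{−i}. Write c(T_i) = Σ_{s∈T_i} c_s. Assume Σ_{i=0}^{k} φ_i > ε·(Σ_{i=0}^{k} c(T_i) + f·Σ_{i=0}^{k} w_i), while Σ_{i=0}^{j} φ_i ≤ ε·(Σ_{i=0}^{j} c(T_i) + f·Σ_{i=0}^{j} w_i) for every j < k. Then Σ_{i=0}^{k}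 β_i·φ_i ≥ Σ_{i=0}^{k} Σ_{s∈T_i} 2·max(i − b_s + 1, 0) + (2f/ε)·Σ_{i=0}^{k} a_i. -/
theorem down_potential_lower_bound {ι : Type*}
    (ε : ℝ) (f k : ℕ)
    (hε0 : 0 < ε) (hε1 : ε < 1)
    (T : ℕ → Finset ι) (c : ι → ℝ) (b : ι → ℕ)
    (φ : ℕ → ℝ) (a : ℕ → ℕ) (w : ℕ → ℝ)
    (hc : ∀ i ∈ Finset.range (k + 1), ∀ s ∈ T i, c s ≥ (1 + ε) ^ (-((b s : ℤ) + 1)))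
    (hφ : ∀ i ∈ Finset.range (k + 1), 0 ≤ φ i)
    (hw : ∀ i ∈ Finset.range (k + 1), w i ≥ (a i : ℝ) * (1 + ε) ^ (-(i : ℤ)))
    (hgt : ∑ i ∈ Finset.range (k + 1), φ i >
      ε * ((∑ i ∈ Finset.range (k + 1), ∑ s ∈ T i, c s)
            + f * ∑ i ∈ Finset.range (k + 1), w i))
    (hle : ∀ j < k, ∑ i ∈ Finset.range (j + 1), φ i ≤
      ε * ((∑ i ∈ Finset.range (j + 1), ∑ s ∈ T i, c s)
            + f * ∑ i ∈ Finset.range (j + 1), w i)) :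
    ∑ i ∈ Finset.range (k + 1), (2 / ε ^ 2) * (1 + ε) ^ (i + 1) * φ i ≥
      (∑ i ∈ Finset.range (k + 1), ∑ s ∈ T i,
        2 * ((max ((i : ℤ) - b s + 1) 0 : ℤ) : ℝ))
      + (2 * f / ε) * ∑ i ∈ Finset.range (k + 1), (a i : ℝ) := by
  have h1ε : (0:ℝ) < 1 + ε := by linarith
  have h1ε1 : (1:ℝ) ≤ 1 + ε := by linarith
  set g : ℕ → ℝ := fun i => (∑ s ∈ T i, c s) + (f : ℝ) * w i with hgdef
  set β : ℕ → ℝ := fun i => (2 / ε ^ 2) * (1 + ε) ^ (i + 1) with hβdef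
  -- rewrite sums of g
  have hgsum : ∀ n : ℕ, ∑ i ∈ Finset.range n, g i =
      (∑ i ∈ Finset.range n, ∑ s ∈ T i, c s) + (f : ℝ) * ∑ i ∈ Finset.range n, w i := by
    intro n
    simp [hgdef, Finset.sum_add_distrib, Finset.mul_sum]
  -- tail inequality
  have tail : ∀ j, j ≤ k → ε * ∑ i ∈ Finset.Icc j k, g i ≤ ∑ i ∈ Finset.Icc j k, φ i := by
    intro j hj
    have hIcc : ∀ F : ℕ → ℝ, ∑ i ∈ Finset.Icc j k, F i =
        ∑ i ∈ Finset.range (k+1), F i - ∑ i ∈ Finset.range j, F i := by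
      intro F
      rw [← Finset.Ico_add_one_right_eq_Icc, Finset.sum_Ico_eq_sub F (by omega)]
    rw [hIcc φ, hIcc g]
    have hk : ∑ i ∈ Finset.range (k+1), φ i > ε * ∑ i ∈ Finset.range (k+1), g i := by
      rw [hgsum]; exact hgt
    have hj' : ∑ i ∈ Finset.range j, φ i ≤ ε * ∑ i ∈ Finset.range j, g i := by
      rcases Nat.eq_zero_or_pos j with h0 | hpos
      · subst h0; simp
      · obtain ⟨j', rfl⟩ := Nat.exists_eq_add_of_lt hpos
        rw [hgsum]
        simpa using hle j' (by omega)
    nlinarith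
  -- coefficients d for Abel summation
  set d : ℕ → ℝ := fun j => match j with
    | 0 => β 0
    | j+1 => β (j+1) - β j with hddef
  have hβd : ∀ i, β i = ∑ j ∈ Finset.range (i+1), d j := by
    intro i
    induction i with
    | zero => simp [hddef]
    | succ n ih => rw [Finset.sum_range_succ, ← ih]; simp [hddef]
  have hd0 : ∀ j, 0 ≤ d j := by
    intro j
    have hε2 : (0:ℝ) ≤ 2 / ε ^ 2 := by positivity
    match j with
    | 0 =>
      simp only [hddef, hβdef]
      positivity
    | j+1 =>
      simp only [hddef, hβdef]
      have : (1+ε) ^ (j+1) ≤ (1+ε) ^ (j+1+1) := pow_le_pow_right₀ h1ε1 (by omega)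
      nlinarith
  -- Abel identity
  have abel : ∀ F : ℕ → ℝ, ∑ i ∈ Finset.range (k+1), β i * F i =
      ∑ j ∈ Finset.range (k+1), d j * ∑ i ∈ Finset.Icc j k, F i := by
    intro F
    have h1 : ∑ i ∈ Finset.range (k+1), β i * F i =
        ∑ i ∈ Finset.range (k+1), ∑ j ∈ Finset.range (i+1), d j * F i := by
      refine Finset.sum_congr rfl fun i _ => ?_
      rw [hβd i, Finset.sum_mul]
    rw [h1, Finset.sum_comm' (t' := Finset.range (k+1)) (s' := fun j => Finset.Icc j k)
      (f := fun i j => d j * F i)]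
    · simp [Finset.mul_sum]
    · intro i j
      simp only [Finset.mem_range, Finset.mem_Icc]
      omega
  -- main chain
  have step1 : ∑ i ∈ Finset.range (k+1), β i * φ i ≥
      ε * ∑ i ∈ Finset.range (k+1), β i * g i := by
    rw [abel φ, abel g, Finset.mul_sum]
    refine Finset.sum_le_sum fun j hj => ?_
    have hj' : j ≤ k := by simpa [Nat.lt_succ_iff] using hj
    have := tail j hj'
    have hd := hd0 j
    calc ε * (d j * ∑ i ∈ Finset.Icc j k, g i)
        = d j * (ε * ∑ i ∈ Finset.Icc j k, g i) := by ring
      _ ≤ d j * ∑ i ∈ Finset.Icc j k, φ i := by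
          exact mul_le_mul_of_nonneg_left this hd
  -- per-level lower bound for ε * β i * g i
  have perlevel : ∀ i ∈ Finset.range (k+1),
      (∑ s ∈ T i, 2 * ((max ((i : ℤ) - b s + 1) 0 : ℤ) : ℝ)) + (2 * f / ε) * (a i : ℝ)
        ≤ ε * (β i * g i) := by
    intro i hi
    have hβg : ε * (β i * g i) =
        (2 / ε) * (1 + ε) ^ (i + 1) * (∑ s ∈ T i, c s)
        + (2 * f / ε) * ((1 + ε) ^ (i + 1) * w i) := by
      simp only [hβdef, hgdef]
      field_simp
    rw [hβg]
    have partA : ∑ s ∈ T i, 2 * ((max ((i : ℤ) - b s + 1) 0 : ℤ) : ℝ)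
        ≤ (2 / ε) * (1 + ε) ^ (i + 1) * (∑ s ∈ T i, c s) := by
      rw [Finset.mul_sum]
      refine Finset.sum_le_sum fun s hs => ?_
      have hcs := hc i hi s hs
      have hcs0 : (0:ℝ) < c s := lt_of_lt_of_le (zpow_pos h1ε _) hcs
      by_cases hm : (i : ℤ) - b s + 1 ≤ 0
      · rw [max_eq_right hm]
        norm_num
        positivity
      · push_neg at hm
        have hbi : b s ≤ i := by omega
        have hmax : max ((i : ℤ) - b s + 1) 0 = ((i - b s : ℕ) : ℤ) + 1 := by
          rw [max_eq_left (by omega)]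
          push_cast [hbi]
          ring
        rw [hmax]
        set m : ℕ := i - b s with hm'
        -- (1+ε)^(i+1) * c s ≥ (1+ε)^m
        have key : (1 + ε) ^ m ≤ (1 + ε) ^ (i + 1) * c s := by
          have h1 : (1 + ε) ^ (i + 1) * (1 + ε) ^ (-((b s : ℤ) + 1))
              = (1 + ε) ^ ((i : ℤ) + 1 - (b s + 1)) := by
            rw [← zpow_natCast (1+ε) (i+1), ← zpow_add₀ h1ε.ne']
            push_cast
            ring_nf
          have h2 : ((i : ℤ) + 1 - (b s + 1)) = (m : ℤ) := by
            simp only [hm']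
            omega
          calc (1 + ε) ^ m = (1 + ε) ^ (i + 1) * (1 + ε) ^ (-((b s : ℤ) + 1)) := by
                rw [h1, h2, zpow_natCast]
            _ ≤ (1 + ε) ^ (i + 1) * c s :=
                mul_le_mul_of_nonneg_left hcs (by positivity)
        have bern : ε * (m + 1) ≤ (1 + ε) ^ m := by
          have := one_add_mul_le_pow (a := ε) (by linarith) m
          nlinarith
        have : ε * (m + 1) ≤ (1 + ε) ^ (i + 1) * c s := le_trans bern key
        push_cast
        rw [div_mul_eq_mul_div, div_mul_eq_mul_div, le_div_iff₀ hε0]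
        nlinarith
    have partB : (2 * f / ε) * (a i : ℝ) ≤ (2 * f / ε) * ((1 + ε) ^ (i + 1) * w i) := by
      refine mul_le_mul_of_nonneg_left ?_ (by positivity)
      have hwi := hw i hi
      have h1 : (a i : ℝ) * (1 + ε) ^ (-(i:ℤ)) * (1 + ε) ^ (i+1) ≤ w i * (1 + ε) ^ (i+1) :=
        mul_le_mul_of_nonneg_right hwi (by positivity)
      have h2 : (1 + ε) ^ (-(i:ℤ)) * (1 + ε) ^ (i+1) = 1 + ε := by
        rw [← zpow_natCast (1+ε) (i+1), ← zpow_add₀ h1ε.ne']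
        have : -(i:ℤ) + (i+1 : ℕ) = 1 := by push_cast; ring
        rw [this, zpow_one]
      have h3 : (a i : ℝ) * (1 + ε) ≤ w i * (1 + ε) ^ (i+1) := by
        calc (a i : ℝ) * (1 + ε) = (a i : ℝ) * (1 + ε) ^ (-(i:ℤ)) * (1 + ε) ^ (i+1) := by
              rw [mul_assoc, h2]
          _ ≤ w i * (1 + ε) ^ (i+1) := h1
        -- done
      nlinarith [(Nat.cast_nonneg (a i) : (0:ℝ) ≤ (a i : ℝ))]
    linarith
  -- assemble
  have step2 : ε * ∑ i ∈ Finset.range (k+1), β i * g i ≥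
      (∑ i ∈ Finset.range (k + 1), ∑ s ∈ T i,
        2 * ((max ((i : ℤ) - b s + 1) 0 : ℤ) : ℝ))
      + (2 * f / ε) * ∑ i ∈ Finset.range (k + 1), (a i : ℝ) := by
    rw [Finset.mul_sum]
    have : (∑ i ∈ Finset.range (k + 1), ∑ s ∈ T i,
        2 * ((max ((i : ℤ) - b s + 1) 0 : ℤ) : ℝ))
        + (2 * f / ε) * ∑ i ∈ Finset.range (k + 1), (a i : ℝ)
        = ∑ i ∈ Finset.range (k+1),
          ((∑ s ∈ T i, 2 * ((max ((i : ℤ) - b s + 1) 0 : ℤ) : ℝ))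
            + (2 * f / ε) * (a i : ℝ)) := by
      rw [Finset.sum_add_distrib, Finset.mul_sum]
    rw [this]
    exact Finset.sum_le_sum perlevel
  calc ∑ i ∈ Finset.range (k + 1), (2 / ε ^ 2) * (1 + ε) ^ (i + 1) * φ i
      = ∑ i ∈ Finset.range (k+1), β i * φ i := by
        refine Finset.sum_congr rfl fun i _ => ?_
        simp [hβdef, mul_assoc]
    _ ≥ ε * ∑ i ∈ Finset.range (k+1), β i * g i := step1
    _ ≥ _ := step2
end
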